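/- For every N ≥ 1, the sandpile group G_{Γ_N} on an N×N square domain Γ_N ⊂ ℤ² contains a cyclic subgroup whose order is the product of all distinct prime factors of N+1 (the radical of N+1). -/

import Mathlib

/-- Two vertices of `ℤ²` are adjacent iff their Euclidean distance is `1`. -/
def adj (u v : ℤ × ℤ) : Prop := (u.1 - v.1) ^ 2 + (u.2 - v.2) ^ 2 = 1

instance : DecidableRel adj := fun u v => by unfold adj; infer_instance

/-- The reduced Laplacian of a finite domain `Γ ⊂ ℤ²`. -/
def lap {R : Type*} [CommRing R] (Γ : Finset (ℤ × ℤ)) (f : ↥Γ → R) : ↥Γ → R :=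
  fun v => (∑ w ∈ Γ.attach.filter (fun w => adj w.1 v.1), f w) - 4 * f v

lemma lap_add {R : Type*} [CommRing R] (Γ : Finset (ℤ × ℤ)) (f g : ↥Γ → R) :
    lap Γ (f + g) = lap Γ f + lap Γ g := by
  funext v; simp [lap, Finset.sum_add_distrib]; ring

lemma lap_neg {R : Type*} [CommRing R] (Γ : Finset (ℤ × ℤ)) (f : ↥Γ → R) :
    lap Γ (-f) = -(lap Γ f) := by
  funext v; simp [lap]; ring

lemma lap_smul {R : Type*} [CommRing R] (Γ : Finset (ℤ × ℤ)) (c : R) (f : ↥Γ → R) :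
    lap Γ (c • f) = c • lap Γ f := by
  funext v
  simp only [lap, Pi.smul_apply, smul_eq_mul, mul_sub, Finset.mul_sum]
  ring

lemma lap_zero {R : Type*} [CommRing R] (Γ : Finset (ℤ × ℤ)) :
    lap Γ (0 : ↥Γ → R) = 0 := by
  funext v; simp [lap]

/-- The boundary `∂Γ`: vertices of `Γ` adjacent to some vertex of `ℤ² \ Γ`. -/
noncomputable def boundary (Γ : Finset (ℤ × ℤ)) : Finset (ℤ × ℤ) :=
  @Finset.filter _ (fun v => ∃ w : ℤ × ℤ, w ∉ Γ ∧ adj w v) (Classical.decPred _) Γ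

lemma boundary_subset (Γ : Finset (ℤ × ℤ)) : boundary Γ ⊆ Γ :=
  @Finset.filter_subset _ (fun v => ∃ w : ℤ × ℤ, w ∉ Γ ∧ adj w v) (Classical.decPred _) Γ

/-- A function on `Γ` is harmonic if its Laplacian vanishes on the interior `Γ \ ∂Γ`. -/
def Harmonic {R : Type*} [CommRing R] (Γ : Finset (ℤ × ℤ)) (f : ↥Γ → R) : Prop :=
  ∀ v : ↥Γ, (v : ℤ × ℤ) ∉ boundary Γ → lap Γ f v = 0

/-- `Γ ⊂ ℤ²` is a convex domain if it is the set of lattice points of a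
convex open subset of `ℝ²`. -/
def IsConvexDomain (Γ : Finset (ℤ × ℤ)) : Prop :=
  ∃ P : Set (ℝ × ℝ), Convex ℝ P ∧ IsOpen P ∧
    ∀ v : ℤ × ℤ, v ∈ Γ ↔ ((v.1 : ℝ), (v.2 : ℝ)) ∈ P

/-- The reduced Laplacian as an additive group homomorphism on `ℤ^Γ`. -/
def lapHom (Γ : Finset (ℤ × ℤ)) : (↥Γ → ℤ) →+ (↥Γ → ℤ) where
  toFun := lap Γ
  map_zero' := lap_zero Γ
  map_add' := lap_add Γ

/-- The sandpile group `G_Γ = ℤ^Γ / Δ_Γ(ℤ^Γ)`. -/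
def SandpileGroup (Γ : Finset (ℤ × ℤ)) : Type :=
  (↥Γ → ℤ) ⧸ (lapHom Γ).range

instance (Γ : Finset (ℤ × ℤ)) : AddCommGroup (SandpileGroup Γ) :=
  inferInstanceAs (AddCommGroup ((↥Γ → ℤ) ⧸ (lapHom Γ).range))

/-- The canonical projection `ℤ^Γ → G_Γ`. -/
def sandMk (Γ : Finset (ℤ × ℤ)) : (↥Γ → ℤ) →+ SandpileGroup Γ :=
  QuotientAddGroup.mk' _

/-- The `N×N` square domain `Γ_N = {1, …, N} × {1, …, N} ⊂ ℤ²`. -/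
noncomputable def squareDomain (N : ℕ) : Finset (ℤ × ℤ) :=
  Finset.Icc 1 (N : ℤ) ×ˢ Finset.Icc 1 (N : ℤ)

/-!
The function `(x, y) ↦ x * y` is harmonic on `ℤ²` and vanishes modulo `N + 1` on the lines
`x, y ∈ {0, N + 1}` bordering `Γ_N`, so modulo `N + 1` it lies in the kernel of `Δ_{Γ_N}`. As the
reduced Laplacian is symmetric, pairing with this kernel vector is a homomorphism
`G_{Γ_N} → ℤ/(N + 1)`; it sends the class of the corner `(1, 1)` to `1`, so that class has order
divisible by `N + 1`, hence by `rad (N + 1)`, and a multiple of it generates a cyclic subgroup of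
order `rad (N + 1)`. The orders are finite because `G_Γ` is finite for every finite `Γ`: by the
maximum principle `Δ_Γ` is injective on `ℤ^Γ`, so its image has full rank.
-/

def neighbors (v : ℤ × ℤ) : Finset (ℤ × ℤ) :=
  {(v.1 + 1, v.2), (v.1 - 1, v.2), (v.1, v.2 + 1), (v.1, v.2 - 1)}

lemma adj_iff_mem_neighbors {u v : ℤ × ℤ} : adj u v ↔ u ∈ neighbors v := by
  obtain ⟨a, b⟩ := u
  obtain ⟨c, d⟩ := v
  simp only [adj, neighbors, Finset.mem_insert, Finset.mem_singleton, Prod.mk.injEq]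
  constructor
  · intro h
    obtain ⟨s, rfl⟩ : ∃ s, a = c + s := ⟨a - c, by ring⟩
    obtain ⟨t, rfl⟩ : ∃ t, b = d + t := ⟨b - d, by ring⟩
    have hs : -1 ≤ s ∧ s ≤ 1 := by constructor <;> nlinarith [sq_nonneg t]
    have ht : -1 ≤ t ∧ t ≤ 1 := by constructor <;> nlinarith [sq_nonneg s]
    obtain ⟨hs₁, hs₂⟩ := hs
    obtain ⟨ht₁, ht₂⟩ := ht
    interval_cases s <;> interval_cases t <;> simp_all <;> ring
  · rintro (⟨rfl, rfl⟩ | ⟨rfl, rfl⟩ | ⟨rfl, rfl⟩ | ⟨rfl, rfl⟩) <;> ring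

lemma adj_comm {u v : ℤ × ℤ} : adj u v ↔ adj v u := by
  simp only [adj]
  constructor <;> intro h <;> linear_combination h

lemma sum_neighbors {M : Type*} [AddCommMonoid M] (φ : ℤ × ℤ → M) (v : ℤ × ℤ) :
    ∑ u ∈ neighbors v, φ u =
      φ (v.1 + 1, v.2) + φ (v.1 - 1, v.2) + φ (v.1, v.2 + 1) + φ (v.1, v.2 - 1) := by
  rw [neighbors, Finset.sum_insert, Finset.sum_insert, Finset.sum_pair, add_assoc, add_assoc]
  all_goals simp
  all_goals omega

section Laplacian

variable {R : Type*} [CommRing R] {Γ : Finset (ℤ × ℤ)}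

lemma lap_apply_eq_sum_neighbors (φ : ℤ × ℤ → R) (v : ↥Γ)
    (hφ : ∀ u, adj u v → u ∉ Γ → φ u = 0) :
    lap Γ (fun w => φ w) v = ∑ u ∈ neighbors v, φ u - 4 * φ v := by
  classical
  have hΓ : ∑ w ∈ Γ.attach.filter (fun w => adj w.1 v.1), φ w
      = ∑ u ∈ Γ.filter (fun u => adj u v), φ u := by
    rw [Finset.sum_filter, Finset.sum_attach Γ (fun u => if adj u v then φ u else 0),
      ← Finset.sum_filter]
  rw [lap, hΓ]
  congr 1
  refine Finset.sum_subset (fun u hu => ?_) (fun u hu hΓu => ?_)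
  · exact adj_iff_mem_neighbors.mp (Finset.mem_filter.mp hu).2
  · have hadj := adj_iff_mem_neighbors.mpr hu
    exact hφ u hadj fun h => hΓu (Finset.mem_filter.mpr ⟨h, hadj⟩)

def extendByZero (f : ↥Γ → R) (u : ℤ × ℤ) : R :=
  if h : u ∈ Γ then f ⟨u, h⟩ else 0

lemma lap_apply_eq_sum_extendByZero (f : ↥Γ → R) (v : ↥Γ) :
    lap Γ f v = ∑ u ∈ neighbors v, extendByZero f u - 4 * f v := by
  have hf : (fun w : ↥Γ => extendByZero f w) = f := funext fun w => dif_pos w.2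
  have := lap_apply_eq_sum_neighbors (extendByZero f) v fun u _ hu => dif_neg hu
  rwa [hf, show extendByZero f v = f v from congrFun hf v] at this

lemma lap_map {S : Type*} [CommRing S] (ψ : R →+* S) (f : ↥Γ → R) :
    lap Γ (ψ ∘ f) = ψ ∘ lap Γ f := by
  funext v
  simp [lap, map_sum, map_ofNat]

lemma sum_mul_lap_comm (a b : ↥Γ → R) :
    ∑ v, a v * lap Γ b v = ∑ v, lap Γ a v * b v := by
  have hsym : ∑ v, a v * ∑ w ∈ Γ.attach.filter (fun w => adj w.1 v.1), b w
      = ∑ v, (∑ w ∈ Γ.attach.filter (fun w => adj w.1 v.1), a w) * b v := by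
    simp only [Finset.mul_sum, Finset.sum_mul, Finset.sum_filter, Finset.univ_eq_attach]
    rw [Finset.sum_comm]
    refine Finset.sum_congr rfl fun v _ => Finset.sum_congr rfl fun w _ => ?_
    simp only [adj_comm (u := v.1)]
    split_ifs <;> ring
  simp only [lap, mul_sub, sub_mul, Finset.sum_sub_distrib, hsym]
  congr 1
  exact Finset.sum_congr rfl fun v _ => by ring

end Laplacian

section MaximumPrinciple

variable {R : Type*} [CommRing R] [LinearOrder R] [IsStrictOrderedRing R] {Γ : Finset (ℤ × ℤ)}

lemma nonpos_of_lap_eq_zero {f : ↥Γ → R} (hf : lap Γ f = 0) (v : ↥Γ) : f v ≤ 0 := by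
  by_contra! hv
  obtain ⟨m, -, hm⟩ := Γ.attach.exists_max_image f ⟨v, Γ.mem_attach v⟩
  have hpos : 0 < f m := hv.trans_le (hm v (Γ.mem_attach v))
  -- among the maxima of `f`, take a rightmost one: its right neighbor is strictly smaller
  obtain ⟨c, hcm, hc⟩ := (Γ.attach.filter fun w => f w = f m).exists_max_image
    (fun w => w.1.1) ⟨m, Finset.mem_filter.mpr ⟨Γ.mem_attach m, rfl⟩⟩
  have hle : ∀ u, extendByZero f u ≤ f m := fun u => by
    unfold extendByZero
    split_ifs
    exacts [hm _ (Γ.mem_attach _), hpos.le]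
  have hlt : extendByZero f (c.1.1 + 1, c.1.2) < f m := by
    unfold extendByZero
    split_ifs with h
    · refine (hm _ (Γ.mem_attach _)).lt_of_ne fun heq => ?_
      have := hc ⟨_, h⟩ (Finset.mem_filter.mpr ⟨Γ.mem_attach _, heq⟩)
      simp at this
    · exact hpos
  have hc0 := congrFun hf c
  rw [lap_apply_eq_sum_extendByZero, sum_neighbors, (Finset.mem_filter.mp hcm).2,
    Pi.zero_apply] at hc0
  linarith [hle (c.1.1 - 1, c.1.2), hle (c.1.1, c.1.2 + 1), hle (c.1.1, c.1.2 - 1)]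

lemma lap_injective : Function.Injective (lap Γ : (↥Γ → R) → ↥Γ → R) := by
  intro f g hfg
  have h : lap Γ (f - g) = 0 := by rw [sub_eq_add_neg, lap_add, lap_neg, hfg, add_neg_cancel]
  have h' : lap Γ (-(f - g)) = 0 := by rw [lap_neg, h, neg_zero]
  funext v
  refine sub_eq_zero.mp (le_antisymm (nonpos_of_lap_eq_zero h v) ?_)
  simpa using nonpos_of_lap_eq_zero h' v

end MaximumPrinciple

instance SandpileGroup.instFinite (Γ : Finset (ℤ × ℤ)) : Finite (SandpileGroup Γ) :=
  Submodule.finiteQuotientOfFreeOfRankEq (LinearMap.range (lapHom Γ).toIntLinearMap)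
    (LinearMap.finrank_range_of_inj lap_injective)

lemma exists_addOrderOf_eq_of_dvd {G : Type*} [AddMonoid G] {g : G} (hg : addOrderOf g ≠ 0)
    {n : ℕ} (hn : n ∣ addOrderOf g) : ∃ h : G, addOrderOf h = n :=
  ⟨(addOrderOf g / n) • g, by
    simpa only [← orderOf_ofAdd_eq_addOrderOf, ofAdd_nsmul] using
      orderOf_pow_orderOf_div (x := Multiplicative.ofAdd g) hg hn⟩

namespace SandpileGroup

variable {R : Type*} [CommRing R] {Γ : Finset (ℤ × ℤ)}

/-- Pairing with a function `h` in the kernel of `Δ_Γ` kills the image of `Δ_Γ`, because `Δ_Γ`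
is symmetric. -/
def pairing (h : ↥Γ → R) (hh : lap Γ h = 0) : SandpileGroup Γ →+ R :=
  QuotientAddGroup.lift _
    { toFun := fun g => ∑ v, h v * (g v : R)
      map_zero' := by simp
      map_add' := fun f g => by simp [mul_add, Finset.sum_add_distrib] }
    (by
      rintro _ ⟨g, rfl⟩
      change ∑ v, h v * ((Int.castRingHom R) ∘ lap Γ g) v = 0
      rw [← lap_map, sum_mul_lap_comm, hh]
      simp)

lemma pairing_sandMk_single (h : ↥Γ → R) (hh : lap Γ h = 0) (v : ↥Γ) :
    pairing h hh (sandMk Γ (Pi.single v 1)) = h v := by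
  classical
  change ∑ w, h w * ((Pi.single v 1 : ↥Γ → ℤ) w : R) = h v
  simp [Pi.single_apply]

lemma dvd_addOrderOf_sandMk_single {n : ℕ} (h : ↥Γ → ZMod n) (hh : lap Γ h = 0) (v : ↥Γ)
    (hv : h v = 1) : n ∣ addOrderOf (sandMk Γ (Pi.single v 1)) := by
  have := addOrderOf_map_dvd (pairing h hh) (sandMk Γ (Pi.single v 1))
  rwa [pairing_sandMk_single, hv, ZMod.addOrderOf_one] at this

end SandpileGroup

lemma mem_squareDomain {N : ℕ} {v : ℤ × ℤ} :
    v ∈ squareDomain N ↔ 1 ≤ v.1 ∧ v.1 ≤ N ∧ 1 ≤ v.2 ∧ v.2 ≤ N := by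
  simp [squareDomain, and_assoc]

lemma lap_squareDomain_mul_eq_zero (N : ℕ) :
    lap (squareDomain N) (fun v => ((v.1.1 * v.1.2 : ℤ) : ZMod (N + 1))) = 0 := by
  funext v
  have hv := mem_squareDomain.mp v.2
  have hφ : ∀ u, adj u v → u ∉ squareDomain N → ((u.1 * u.2 : ℤ) : ZMod (N + 1)) = 0 := by
    intro u hadj hu
    rw [adj_iff_mem_neighbors] at hadj
    rw [mem_squareDomain] at hu
    have hu' : u.1 = 0 ∨ u.1 = N + 1 ∨ u.2 = 0 ∨ u.2 = N + 1 := by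
      simp only [neighbors, Finset.mem_insert, Finset.mem_singleton] at hadj
      rcases hadj with rfl | rfl | rfl | rfl <;> omega
    rw [ZMod.intCast_zmod_eq_zero_iff_dvd]
    rcases hu' with h | h | h | h <;> simp [h]
  rw [lap_apply_eq_sum_neighbors _ v hφ, sum_neighbors, Pi.zero_apply]
  push_cast
  ring

lemma exists_succ_dvd_addOrderOf_squareDomain {N : ℕ} (hN : 1 ≤ N) :
    ∃ g : SandpileGroup (squareDomain N), N + 1 ∣ addOrderOf g :=
  ⟨_, SandpileGroup.dvd_addOrderOf_sandMk_single _ (lap_squareDomain_mul_eq_zero N)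
    ⟨(1, 1), mem_squareDomain.mpr (by omega)⟩ (by simp)⟩

/-- For every `N ≥ 1`, the sandpile group on the `N×N` square
domain contains a cyclic subgroup whose order is the radical of `N+1`, i.e. the
product of all distinct prime factors of `N+1`. -/
theorem square_has_cyclic_subgroup_radical (N : ℕ) (hN : 1 ≤ N) :
    ∃ S : AddSubgroup (SandpileGroup (squareDomain N)),
      IsAddCyclic ↥S ∧ Nat.card ↥S = ∏ p ∈ (N + 1).primeFactors, p := by
  obtain ⟨g, hg⟩ := exists_succ_dvd_addOrderOf_squareDomain hN
  obtain ⟨h, hh⟩ := exists_addOrderOf_eq_of_dvd (addOrderOf_pos g).ne'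
    ((Nat.prod_primeFactors_dvd (N + 1)).trans hg)
  exact ⟨AddSubgroup.zmultiples h, inferInstance, by rw [Nat.card_zmultiples, hh]⟩
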